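/- Let ρ > 0, σ > 0 and γ ∈ ℝ. Set L_n = 2⌊√(2n)·σ⌋ + ⌊(8n/9)^{1/4}·γ⌋ and m_n = ⌊nρ⌋ (both are positive for all sufficiently large n). Then, as n → ∞, (1 + L_n/(4 m_n))^{4 m_n} / exp(L_n − σ²/ρ) converges to 1. -/

import Mathlib

/-!
Write `t = L / (4m)`. The Taylor bound `log (1 + t) = t - t² / 2 + O(t³)` gives
`4m · log (1 + t) = L - L² / (8m) + O(L³ / m²)`. Since `L ~ 2√(2n)·σ` and `m ~ nρ`, the
quadratic term tends to `σ² / ρ` and the cubic error to `0`; the floors only cost `O(1)`.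
-/

open Filter

/-- `L_n = 2⌊√(2n)·σ⌋ + ⌊(8n/9)^{1/4}·γ⌋`. -/
noncomputable def Lseq (σ γ : ℝ) (n : ℕ) : ℤ :=
  2 * ⌊Real.sqrt (2 * (n : ℝ)) * σ⌋ + ⌊(8 * (n : ℝ) / 9) ^ ((1 : ℝ) / 4) * γ⌋

/-- `m_n = ⌊nρ⌋`. -/
noncomputable def mseq (ρ : ℝ) (n : ℕ) : ℤ := ⌊(n : ℝ) * ρ⌋

open Real Topology

lemma tendsto_floor_div_of_tendsto_div {α : Type*} {l : Filter α} {f g : α → ℝ} {c : ℝ}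
    (hg : Tendsto g l atTop) (hfg : Tendsto (fun x => f x / g x) l (𝓝 c)) :
    Tendsto (fun x => (⌊f x⌋ : ℝ) / g x) l (𝓝 c) := by
  have hfract : Tendsto (fun x => Int.fract (f x) / g x) l (𝓝 0) := by
    refine squeeze_zero' ?_ ?_ hg.inv_tendsto_atTop
    all_goals filter_upwards [hg.eventually_gt_atTop 0] with x hx
    · exact div_nonneg (Int.fract_nonneg _) hx.le
    · exact div_le_div_of_nonneg_right (Int.fract_lt_one _).le hx.le |>.trans_eq (one_div _)
  simpa only [sub_zero, ← sub_div, Int.self_sub_fract] using hfg.sub hfract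

lemma abs_log_one_add_sub_le {t : ℝ} (ht : |t| ≤ 1 / 2) :
    |log (1 + t) - t + t ^ 2 / 2| ≤ 2 * |t| ^ 3 := by
  have key := abs_log_sub_add_sum_range_le (x := -t) (by rw [abs_neg]; linarith) 2
  simp only [Finset.sum_range_succ, Finset.sum_range_zero, abs_neg, sub_neg_eq_add] at key
  norm_num at key
  calc |log (1 + t) - t + t ^ 2 / 2| = |-t + t ^ 2 / 2 + log (1 + t)| := by ring_nf
    _ ≤ |t| ^ 3 / (1 - |t|) := key
    _ ≤ 2 * |t| ^ 3 := by
      rw [div_le_iff₀ (by linarith)]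
      nlinarith [pow_nonneg (abs_nonneg t) 3]

lemma tendsto_mul_log_one_add_div_sub {α : Type*} {l : Filter α} {a M : α → ℝ} {c : ℝ}
    (hM : ∀ᶠ x in l, M x ≠ 0) (hsq : Tendsto (fun x => a x ^ 2 / (2 * M x)) l (𝓝 c))
    (hlin : Tendsto (fun x => a x / M x) l (𝓝 0)) :
    Tendsto (fun x => M x * log (1 + a x / M x) - a x) l (𝓝 (-c)) := by
  have hrem : Tendsto (fun x => M x * (log (1 + a x / M x) - a x / M x + (a x / M x) ^ 2 / 2))
      l (𝓝 0) := by
    have hbound : Tendsto (fun x => 4 * |a x ^ 2 / (2 * M x)| * |a x / M x|) l (𝓝 0) := by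
      simpa using (hsq.abs.const_mul 4).mul hlin.abs
    refine squeeze_zero_norm' ?_ hbound
    filter_upwards [hlin.abs.eventually (eventually_le_nhds (by norm_num : |(0 : ℝ)| < 1 / 2))]
      with x hx
    rw [norm_mul, norm_eq_abs]
    calc |M x| * |log (1 + a x / M x) - a x / M x + (a x / M x) ^ 2 / 2|
        ≤ |M x| * (2 * |a x / M x| ^ 3) := by gcongr; exact abs_log_one_add_sub_le hx
      _ = 4 * |a x ^ 2 / (2 * M x)| * |a x / M x| := by
        simp only [abs_div, abs_mul, abs_pow, abs_two]
        field_simp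
        ring
  simpa only [zero_sub] using (hrem.sub hsq).congr' <| by
    filter_upwards [hM] with x hx
    field_simp
    ring

lemma tendsto_one_add_div_zpow_div_exp {α : Type*} {l : Filter α} {a : α → ℝ} {k : α → ℤ}
    {c : ℝ} (hk : ∀ᶠ x in l, k x ≠ 0) (hsq : Tendsto (fun x => a x ^ 2 / (2 * k x)) l (𝓝 c))
    (hlin : Tendsto (fun x => a x / k x) l (𝓝 0)) :
    Tendsto (fun x => (1 + a x / k x) ^ k x / exp (a x - c)) l (𝓝 1) := by
  have hlog := tendsto_mul_log_one_add_div_sub (hk.mono fun _ => Int.cast_ne_zero.2) hsq hlin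
  have hexp : Tendsto (fun x => exp (k x * log (1 + a x / k x) - a x + c)) l (𝓝 1) := by
    simpa [Function.comp_def] using (continuous_exp.tendsto _).comp (hlog.add_const c)
  refine hexp.congr' ?_
  filter_upwards [hlin.eventually (eventually_gt_nhds (by norm_num : (-1 : ℝ) < 0))] with x hx
  rw [← rpow_intCast, rpow_def_of_pos (by linarith), ← exp_sub]
  ring_nf

lemma tendsto_mseq_div (ρ : ℝ) : Tendsto (fun n : ℕ => (mseq ρ n : ℝ) / n) atTop (𝓝 ρ) := by
  refine tendsto_floor_div_of_tendsto_div tendsto_natCast_atTop_atTop <|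
    tendsto_const_nhds.congr' ?_
  filter_upwards [eventually_gt_atTop 0] with n hn
  field_simp

lemma tendsto_Lseq_div_sqrt (σ γ : ℝ) :
    Tendsto (fun n : ℕ => (Lseq σ γ n : ℝ) / √n) atTop (𝓝 (2 * (√2 * σ))) := by
  have hsqrt : Tendsto (fun n : ℕ => √(n : ℝ)) atTop atTop :=
    tendsto_sqrt_atTop.comp tendsto_natCast_atTop_atTop
  have hmain : Tendsto (fun n : ℕ => (⌊√(2 * n) * σ⌋ : ℝ) / √n) atTop (𝓝 (√2 * σ)) := by
    refine tendsto_floor_div_of_tendsto_div hsqrt <| tendsto_const_nhds.congr' ?_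
    filter_upwards [hsqrt.eventually_gt_atTop 0] with n hn
    rw [sqrt_mul zero_le_two]
    field_simp
  have hsmall : Tendsto (fun n : ℕ => (⌊(8 * (n : ℝ) / 9) ^ ((1 : ℝ) / 4) * γ⌋ : ℝ) / √n)
      atTop (𝓝 0) := by
    have hrpow := ((tendsto_rpow_neg_atTop (by norm_num : (0 : ℝ) < 1 / 4)).comp
      tendsto_natCast_atTop_atTop).const_mul (γ * (8 / 9 : ℝ) ^ ((1 : ℝ) / 4))
    rw [mul_zero] at hrpow
    refine tendsto_floor_div_of_tendsto_div hsqrt <| hrpow.congr' ?_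
    filter_upwards [eventually_gt_atTop 0] with n hn
    have hn : (0 : ℝ) < n := Nat.cast_pos.2 hn
    rw [Function.comp_apply, sqrt_eq_rpow, show 8 * (n : ℝ) / 9 = 8 / 9 * n by ring,
      mul_rpow (by norm_num) hn.le,
      show -(1 / 4 : ℝ) = 1 / 4 - 1 / 2 by norm_num, rpow_sub hn]
    ring
  have hsum := (hmain.const_mul 2).add hsmall
  rw [add_zero] at hsum
  refine hsum.congr fun n => ?_
  simp only [Lseq]
  push_cast
  ring

section SqrtScale

variable {a b : ℕ → ℝ} {α β : ℝ}

lemma tendsto_sq_div_of_tendsto_div_sqrt (ha : Tendsto (fun n => a n / √n) atTop (𝓝 α))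
    (hb : Tendsto (fun n => b n / n) atTop (𝓝 β)) (hβ : β ≠ 0) :
    Tendsto (fun n => a n ^ 2 / b n) atTop (𝓝 (α ^ 2 / β)) := by
  refine ((ha.pow 2).div hb hβ).congr' ?_
  filter_upwards [(tendsto_natCast_atTop_atTop (R := ℝ)).eventually_gt_atTop 0] with n hn
  rw [Pi.div_apply, div_pow, sq_sqrt hn.le, div_div_div_cancel_right₀ hn.ne']

lemma tendsto_div_of_tendsto_div_sqrt (ha : Tendsto (fun n => a n / √n) atTop (𝓝 α))
    (hb : Tendsto (fun n => b n / n) atTop (𝓝 β)) (hβ : 0 < β) :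
    Tendsto (fun n => a n / b n) atTop (𝓝 0) := by
  refine (ha.div_atTop (hb.pos_mul_atTop hβ
    (tendsto_sqrt_atTop.comp tendsto_natCast_atTop_atTop))).congr' ?_
  filter_upwards [(tendsto_natCast_atTop_atTop (R := ℝ)).eventually_gt_atTop 0] with n hn
  rw [Function.comp_apply, div_div, mul_comm (√n), mul_assoc, mul_self_sqrt hn.le,
    div_mul_cancel₀ _ hn.ne']

end SqrtScale

theorem tendsto_pow_four_general (ρ σ γ : ℝ) (hρ : 0 < ρ) :
    Tendsto
      (fun n : ℕ =>
        (1 + (Lseq σ γ n : ℝ) / (4 * (mseq ρ n : ℝ))) ^ (4 * mseq ρ n) /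
          Real.exp ((Lseq σ γ n : ℝ) - σ ^ 2 / ρ))
      atTop (nhds 1) := by
  have hL := tendsto_Lseq_div_sqrt σ γ
  have hk : Tendsto (fun n => ((4 * mseq ρ n : ℤ) : ℝ) / n) atTop (𝓝 (4 * ρ)) := by
    simpa only [Int.cast_mul, Int.cast_ofNat, mul_div_assoc] using (tendsto_mseq_div ρ).const_mul 4
  have hk_pos : ∀ᶠ n : ℕ in atTop, 4 * mseq ρ n ≠ 0 := by
    filter_upwards [(tendsto_natCast_atTop_atTop.atTop_mul_const hρ).eventually_ge_atTop 1]
      with n hn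
    exact mul_ne_zero four_ne_zero (Int.floor_pos.2 hn).ne'
  have hsq := tendsto_sq_div_of_tendsto_div_sqrt hL (b := fun n => 2 * ((4 * mseq ρ n : ℤ) : ℝ))
    (by simpa only [mul_div_assoc] using hk.const_mul 2) (by positivity)
  have hc : (2 * (√2 * σ)) ^ 2 / (2 * (4 * ρ)) = σ ^ 2 / ρ := by
    rw [mul_pow, mul_pow, sq_sqrt zero_le_two]
    field_simp
    ring
  rw [hc] at hsq
  refine (tendsto_one_add_div_zpow_div_exp hk_pos hsq
    (tendsto_div_of_tendsto_div_sqrt hL hk (by positivity))).congr fun n => ?_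
  push_cast
  rfl

/-- As `n → ∞`, `(1 + L_n/(4 m_n))^{4 m_n} / exp(L_n − σ²/ρ)` converges to `1`. -/
theorem tendsto_pow_four (ρ σ γ : ℝ) (hρ : 0 < ρ) (hσ : 0 < σ) :
    Tendsto
      (fun n : ℕ =>
        (1 + (Lseq σ γ n : ℝ) / (4 * (mseq ρ n : ℝ))) ^ (4 * mseq ρ n) /
          Real.exp ((Lseq σ γ n : ℝ) - σ ^ 2 / ρ))
      atTop (nhds 1) :=
  tendsto_pow_four_general ρ σ γ hρ
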